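/- (Invertibility of the Nambu–Goto Legendre map.) Let T > 0, let G be a symmetric invertible n×n real matrix, let X be an n×2 real matrix, set g := Xᵀ G X with det g < 0, define P := −T·√(−det g)·g⁻¹·Xᵀ·G and Π := P·G⁻¹·Pᵀ. Then Π is invertible and X = −(1/T)·√(−det Π)·G⁻¹·Pᵀ·Π⁻¹; i.e. the multivelocities are recovered from the multimomenta by x^ν_b = −(1/T)√(−det Π) G^{μν} Π_{ab} p^a_μ, where Π_{ab} denotes the inverse matrix of Π^{ab}. -/

import Mathlib

/-! On the image of the Legendre map the momenta are `P = c • L` with `c = −T√(−det g)` and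
`L = g⁻¹XᵀG` a left inverse of `X` with `G⁻¹Lᵀ = Xg⁻¹`. Hence `Π = c²g⁻¹`, so
`det Π = c⁴/det g = T⁴ det g < 0` and `Π⁻¹ = c⁻²g`, which gives `G⁻¹PᵀΠ⁻¹ = c⁻¹X`.
Finally `√(−det Π) = T²√(−det g) = −T c`, so the prefactor `−(1/T)√(−det Π) = c` cancels `c⁻¹`. -/

open Matrix

/-- The induced worldsheet metric `g = Xᵀ G X` of the bosonic string, where `G` is the
spacetime metric and `X` the matrix of multivelocities `x^μ_a`. -/
noncomputable def inducedMetric (n : ℕ) (G : Matrix (Fin n) (Fin n) ℝ)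
    (X : Matrix (Fin n) (Fin 2) ℝ) : Matrix (Fin 2) (Fin 2) ℝ :=
  Xᵀ * G * X

/-- The image of the Nambu–Goto Legendre map: the multimomenta
`p^a_μ = −T·√(−det g)·G_{μν} g^{ba} x^ν_b`, i.e. `P = −T·√(−det g)·g⁻¹·Xᵀ·G`. -/
noncomputable def ngMomenta (n : ℕ) (T : ℝ) (G : Matrix (Fin n) (Fin n) ℝ)
    (X : Matrix (Fin n) (Fin 2) ℝ) : Matrix (Fin 2) (Fin n) ℝ :=
  (-T * Real.sqrt (-(inducedMetric n G X).det)) • ((inducedMetric n G X)⁻¹ * Xᵀ * G)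

/-- The matrix `Π^{ab} = G^{μν} p^a_μ p^b_ν`, i.e. `Π = P·G⁻¹·Pᵀ`. -/
noncomputable def ngPi (n : ℕ) (T : ℝ) (G : Matrix (Fin n) (Fin n) ℝ)
    (X : Matrix (Fin n) (Fin 2) ℝ) : Matrix (Fin 2) (Fin 2) ℝ :=
  ngMomenta n T G X * G⁻¹ * (ngMomenta n T G X)ᵀ

theorem Matrix.IsSymm.transpose_mul_mul {m n R : Type*} [Fintype n] [CommSemiring R]
    {G : Matrix n n R} (hG : G.IsSymm) (X : Matrix n m R) : (Xᵀ * G * X).IsSymm := by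
  rw [IsSymm, transpose_mul, transpose_mul, transpose_transpose, hG.eq, Matrix.mul_assoc]

section MetricLeftInverse

variable {m n R : Type*} [Fintype m] [DecidableEq m] [Fintype n] [CommRing R]

theorem transpose_inv_transpose_mul_mul_mul {G : Matrix n n R} (hG : G.IsSymm)
    (X : Matrix n m R) : ((Xᵀ * G * X)⁻¹ * Xᵀ * G)ᵀ = G * X * (Xᵀ * G * X)⁻¹ := by
  rw [transpose_mul, transpose_mul, transpose_transpose, hG.eq, transpose_nonsing_inv,
    (hG.transpose_mul_mul X).eq]
  simp only [Matrix.mul_assoc]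

variable [DecidableEq n]

theorem inv_transpose_mul_mul_mul_inv_mul_mul_inv {G : Matrix n n R} (hG : IsUnit G.det)
    (X : Matrix n m R) (hg : IsUnit (Xᵀ * G * X).det) :
    (Xᵀ * G * X)⁻¹ * Xᵀ * G * G⁻¹ * (G * X * (Xᵀ * G * X)⁻¹) = (Xᵀ * G * X)⁻¹ := by
  rw [mul_nonsing_inv_cancel_right _ _ hG, show (Xᵀ * G * X)⁻¹ * Xᵀ * (G * X * (Xᵀ * G * X)⁻¹)
      = (Xᵀ * G * X)⁻¹ * (Xᵀ * G * X) * (Xᵀ * G * X)⁻¹ by simp only [Matrix.mul_assoc],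
    nonsing_inv_mul _ hg, Matrix.one_mul]

theorem inv_mul_mul_mul_inv_mul {G : Matrix n n R} {g : Matrix m m R} (hG : IsUnit G.det)
    (hg : IsUnit g.det) (X : Matrix n m R) : G⁻¹ * (G * X * g⁻¹) * g = X := by
  simp only [Matrix.mul_assoc, nonsing_inv_mul _ hg, Matrix.mul_one,
    nonsing_inv_mul_cancel_left _ _ hG]

end MetricLeftInverse

section NambuGoto

variable {n : ℕ} {T : ℝ} {G : Matrix (Fin n) (Fin n) ℝ} {X : Matrix (Fin n) (Fin 2) ℝ}

noncomputable def ngScale (n : ℕ) (T : ℝ) (G : Matrix (Fin n) (Fin n) ℝ)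
    (X : Matrix (Fin n) (Fin 2) ℝ) : ℝ :=
  -T * Real.sqrt (-(inducedMetric n G X).det)

theorem ngScale_ne_zero (hT : T ≠ 0) (hg : (inducedMetric n G X).det < 0) :
    ngScale n T G X ≠ 0 :=
  mul_ne_zero (neg_ne_zero.mpr hT) (Real.sqrt_pos.mpr (neg_pos.mpr hg)).ne'

theorem ngScale_sq (hg : (inducedMetric n G X).det ≤ 0) :
    ngScale n T G X ^ 2 = T ^ 2 * -(inducedMetric n G X).det := by
  rw [ngScale, mul_pow, neg_sq, Real.sq_sqrt (neg_nonneg.mpr hg)]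

theorem ngMomenta_eq_smul :
    ngMomenta n T G X = ngScale n T G X • ((inducedMetric n G X)⁻¹ * Xᵀ * G) :=
  rfl

theorem ngMomenta_transpose (hGsymm : G.IsSymm) :
    (ngMomenta n T G X)ᵀ = ngScale n T G X • (G * X * (inducedMetric n G X)⁻¹) := by
  rw [ngMomenta_eq_smul, transpose_smul, inducedMetric,
    transpose_inv_transpose_mul_mul_mul hGsymm]

theorem ngPi_eq_smul_inv (hGsymm : G.IsSymm) (hG : IsUnit G.det)
    (hg : IsUnit (inducedMetric n G X).det) :
    ngPi n T G X = ngScale n T G X ^ 2 • (inducedMetric n G X)⁻¹ := by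
  rw [ngPi, ngMomenta_transpose hGsymm, ngMomenta_eq_smul, Matrix.smul_mul, Matrix.smul_mul,
    Matrix.mul_smul, smul_smul, ← sq, inducedMetric,
    inv_transpose_mul_mul_mul_inv_mul_mul_inv hG X hg]

theorem ngPi_inv (hT : T ≠ 0) (hGsymm : G.IsSymm) (hG : IsUnit G.det)
    (hg : (inducedMetric n G X).det < 0) :
    (ngPi n T G X)⁻¹ = (ngScale n T G X ^ 2)⁻¹ • inducedMetric n G X := by
  have hgu := isUnit_iff_ne_zero.mpr hg.ne
  refine inv_eq_right_inv ?_
  rw [ngPi_eq_smul_inv hGsymm hG hgu, Matrix.smul_mul, Matrix.mul_smul, smul_smul,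
    mul_inv_cancel₀ (pow_ne_zero 2 (ngScale_ne_zero hT hg)), one_smul, nonsing_inv_mul _ hgu]

theorem det_ngPi (hGsymm : G.IsSymm) (hG : IsUnit G.det)
    (hg : (inducedMetric n G X).det < 0) :
    (ngPi n T G X).det = T ^ 4 * (inducedMetric n G X).det := by
  rw [ngPi_eq_smul_inv hGsymm hG (isUnit_iff_ne_zero.mpr hg.ne), det_smul, det_nonsing_inv,
    Ring.inverse_eq_inv', Fintype.card_fin, ngScale_sq hg.le]
  field_simp [hg.ne]

theorem sqrt_neg_det_ngPi (hGsymm : G.IsSymm) (hG : IsUnit G.det)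
    (hg : (inducedMetric n G X).det < 0) :
    Real.sqrt (-(ngPi n T G X).det) = -T * ngScale n T G X := by
  rw [det_ngPi hGsymm hG hg, show -(T ^ 4 * (inducedMetric n G X).det)
      = (T ^ 2) ^ 2 * -(inducedMetric n G X).det by ring,
    Real.sqrt_mul (by positivity), Real.sqrt_sq (by positivity), ngScale]
  ring

theorem inv_mul_ngMomenta_transpose_mul_ngPi_inv (hT : T ≠ 0) (hGsymm : G.IsSymm)
    (hG : IsUnit G.det) (hg : (inducedMetric n G X).det < 0) :
    G⁻¹ * (ngMomenta n T G X)ᵀ * (ngPi n T G X)⁻¹ = (ngScale n T G X)⁻¹ • X := by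
  rw [ngMomenta_transpose hGsymm, ngPi_inv hT hGsymm hG hg]
  simp only [Matrix.mul_smul, Matrix.smul_mul, smul_smul,
    inv_mul_mul_mul_inv_mul hG (isUnit_iff_ne_zero.mpr hg.ne)]
  congr 1
  field_simp [ngScale_ne_zero hT hg]

end NambuGoto

/-- **Invertibility of the Nambu–Goto Legendre map.**
For the Nambu–Goto string (tension `T > 0`, symmetric invertible spacetime metric `G`,
multivelocities `X`, induced metric `g = Xᵀ G X` with `det g < 0`, multimomenta
`P = −T·√(−det g)·g⁻¹·Xᵀ·G`, `Π = P·G⁻¹·Pᵀ`), the matrix `Π` is invertible and the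
multivelocities are recovered from the multimomenta:
`X = −(1/T)·√(−det Π)·G⁻¹·Pᵀ·Π⁻¹`, i.e. `x^ν_b = −(1/T)√(−det Π) G^{μν} Π_{ab} p^a_μ`. -/
theorem ng_legendre_invertible
    (n : ℕ) (T : ℝ) (hT : 0 < T)
    (G : Matrix (Fin n) (Fin n) ℝ) (hGsymm : G.IsSymm) (hG : IsUnit G.det)
    (X : Matrix (Fin n) (Fin 2) ℝ)
    (hg : (inducedMetric n G X).det < 0) :
    IsUnit (ngPi n T G X).det ∧
    X = (-(1 / T) * Real.sqrt (-(ngPi n T G X).det)) •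
          (G⁻¹ * (ngMomenta n T G X)ᵀ * (ngPi n T G X)⁻¹) := by
  refine ⟨?_, ?_⟩
  · rw [det_ngPi hGsymm hG hg, isUnit_iff_ne_zero]
    exact mul_ne_zero (by positivity) hg.ne
  have hc := ngScale_ne_zero hT.ne' hg
  rw [sqrt_neg_det_ngPi hGsymm hG hg,
    inv_mul_ngMomenta_transpose_mul_ngPi_inv hT.ne' hGsymm hG hg, smul_smul,
    show -(1 / T) * (-T * ngScale n T G X) * (ngScale n T G X)⁻¹ = 1 by field_simp, one_smul]
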